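/- arXiv:1006.3692 — 8 statements merged into one kernel-verified Lean document; each statement's English description precedes it below -/
import Mathlib

section
/- For any graph G, the equivalence number of the line graph of G is at most the orientation covering number of G, i.e., eq(L(G)) ≤ σ(G). -/
open SimpleGraph

/-- An orientation of `G`, given as a relation `o` where `o u v` means the
edge `uv` is directed from `u` to `v`: on each edge exactly one direction holds. -/
def IsOrientation {V : Type*} (G : SimpleGraph V) (o : V → V → Prop) : Prop :=
  ∀ u v, G.Adj u v → (o u v ↔ ¬ o v u)

/-- An orientation covering of `G`: a family of orientations such that for every
vertex `v` and edges `vu`, `vw` incident to `v`, some orientation directs both out of `v`. -/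
def IsOrientationCover {V : Type*} (G : SimpleGraph V) {k : ℕ}
    (F : Fin k → (V → V → Prop)) : Prop :=
  (∀ i, IsOrientation G (F i)) ∧
    ∀ v u w, G.Adj v u → G.Adj v w → ∃ i, F i v u ∧ F i v w

/-- The orientation covering number `σ(G)`. -/
noncomputable def orientCoverNum {V : Type*} (G : SimpleGraph V) : ℕ :=
  sInf {k | ∃ F : Fin k → (V → V → Prop), IsOrientationCover G F}

/-- An elbow covering of `G`: a family of orientations such that no path `u,v,w`
is a directed path in every orientation. -/
def IsElbowCover {V : Type*} (G : SimpleGraph V) {k : ℕ}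
    (F : Fin k → (V → V → Prop)) : Prop :=
  (∀ i, IsOrientation G (F i)) ∧
    ∀ u v w, G.Adj u v → G.Adj v w → u ≠ w → ∃ i, ¬ (F i u v ∧ F i v w)

/-- The elbow number `elb(G)`. -/
noncomputable def elbowNum {V : Type*} (G : SimpleGraph V) : ℕ :=
  sInf {k | ∃ F : Fin k → (V → V → Prop), IsElbowCover G F}

/-- A graph is an equivalence graph if it is a disjoint union of cliques,
equivalently its adjacency relation is transitive where defined. -/
def IsEquivalenceGraph {V : Type*} (H : SimpleGraph V) : Prop :=
  ∀ u v w, H.Adj u v → H.Adj v w → u ≠ w → H.Adj u w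

/-- An equivalence covering of `G`: equivalence subgraphs covering all edges. -/
def IsEquivCover {V : Type*} (G : SimpleGraph V) {k : ℕ}
    (F : Fin k → SimpleGraph V) : Prop :=
  (∀ i, F i ≤ G ∧ IsEquivalenceGraph (F i)) ∧
    ∀ u v, G.Adj u v → ∃ i, (F i).Adj u v

/-- The equivalence number `eq(G)`. -/
noncomputable def equivNum {V : Type*} (G : SimpleGraph V) : ℕ :=
  sInf {k | ∃ F : Fin k → SimpleGraph V, IsEquivCover G F}

/-!
An orientation `o` yields an equivalence subgraph of `L(G)` whose cliques are the out-stars of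
`o`, so `σ(G)` orientations give `σ(G)` equivalence graphs covering `L(G)`.

Since `σ(G)` is defined as an `sInf`, it is `0` when `G` has no finite orientation covering, and
then `L(G)` must not have a finite equivalence covering either. For this, note that a clique of
`L(G)` is a star or a triangle. Given an equivalence covering of `L(G)` by `k` graphs and a linear
order on `V`, orient every clique of size at least two out of its centre if it is a star, and out
of its vertex of rank `j` if it is a triangle (`j < 3`); together with `<` and `>` these `3k + 2`
orientations cover `G`.
-/

open Function

section

variable {V : Type*} {G : SimpleGraph V}

def outStarGraph (G : SimpleGraph V) (o : V → V → Prop) : SimpleGraph G.edgeSet where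
  Adj e f := e ≠ f ∧ ∃ x y z, (e : Sym2 V) = s(x, y) ∧ (f : Sym2 V) = s(x, z) ∧ o x y ∧ o x z
  symm := ⟨fun _ _ ⟨hne, x, y, z, he, hf, hy, hz⟩ => ⟨hne.symm, x, z, y, hf, he, hz, hy⟩⟩

lemma outStarGraph_le_lineGraph (o : V → V → Prop) : outStarGraph G o ≤ G.lineGraph := by
  rintro e f ⟨hne, x, y, z, he, hf, -, -⟩
  exact lineGraph_adj_iff_exists.2 ⟨hne, x, by simp [he], by simp [hf]⟩

lemma IsOrientation.isEquivalenceGraph_outStarGraph {o : V → V → Prop} (ho : IsOrientation G o) :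
    IsEquivalenceGraph (outStarGraph G o) := by
  rintro e f g ⟨-, x, y, z, he, hf, hxy, hxz⟩ ⟨-, x', y', z', hf', hg, hxy', hxz'⟩ heg
  have hxz_adj : G.Adj x z := G.mem_edgeSet.1 (hf ▸ f.2)
  rcases Sym2.eq_iff.1 (hf.symm.trans hf') with ⟨rfl, rfl⟩ | ⟨rfl, rfl⟩
  · exact ⟨heg, x, y, z', he, hg, hxy, hxz'⟩
  · exact absurd hxy' ((ho x z hxz_adj).1 hxz)

lemma IsOrientationCover.isEquivCover_lineGraph {k : ℕ} {F : Fin k → V → V → Prop}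
    (hF : IsOrientationCover G F) : IsEquivCover G.lineGraph (fun i => outStarGraph G (F i)) := by
  refine ⟨fun i => ⟨outStarGraph_le_lineGraph _, (hF.1 i).isEquivalenceGraph_outStarGraph⟩, ?_⟩
  intro e f hef
  obtain ⟨hne, x, hxe, hxf⟩ := lineGraph_adj_iff_exists.1 hef
  obtain ⟨y, hy⟩ := Sym2.mem_iff_exists.1 hxe
  obtain ⟨z, hz⟩ := Sym2.mem_iff_exists.1 hxf
  obtain ⟨i, hiy, hiz⟩ :=
    hF.2 x y z (G.mem_edgeSet.1 (hy ▸ e.2)) (G.mem_edgeSet.1 (hz ▸ f.2))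
  exact ⟨i, hne, x, y, z, hy, hz, hiy, hiz⟩

lemma isOrientation_of_injective {β : Type*} [LinearOrder β] (g : Sym2 V → V → β)
    (hg : ∀ z, Injective (g z)) : IsOrientation G (fun x y => g s(x, y) x < g s(x, y) y) := by
  intro x y hxy
  dsimp only
  rw [Sym2.eq_swap]
  exact ⟨lt_asymm, fun h => lt_of_le_of_ne (not_lt.1 h) ((hg _).ne hxy.ne)⟩

lemma exists_isOrientationCover_of_finite {ι : Type*} [Finite ι] (O : ι → V → V → Prop)
    (hO : ∀ i, IsOrientation G (O i))
    (hcov : ∀ v u w, G.Adj v u → G.Adj v w → ∃ i, O i v u ∧ O i v w) :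
    ∃ k, ∃ F : Fin k → V → V → Prop, IsOrientationCover G F := by
  obtain ⟨k, ⟨eqv⟩⟩ := Finite.exists_equiv_fin ι
  refine ⟨k, O ∘ eqv.symm, fun i => hO _, fun v u w hu hw => ?_⟩
  obtain ⟨i, hi⟩ := hcov v u w hu hw
  exact ⟨eqv i, by simpa using hi⟩

lemma Sym2.mem_of_meets_triangle {u v w t : V} {h : Sym2 V} (hvu : v ≠ u) (hvw : v ≠ w)
    (huw : u ≠ w) (h₁ : ∃ x ∈ h, x ∈ s(v, u)) (h₂ : ∃ x ∈ h, x ∈ s(v, w))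
    (h₃ : ∃ x ∈ h, x ∈ s(u, w)) (ht : t ∈ h) : t ∈ ({u, v, w} : Set V) := by
  induction h using Sym2.ind
  simp only [Sym2.mem_iff] at *
  grind

section LineGraphCliques

variable {H : SimpleGraph G.edgeSet}

def neighborVerts (H : SimpleGraph G.edgeSet) (z : Sym2 V) : Set V :=
  {t | ∃ e f : G.edgeSet, (e : Sym2 V) = z ∧ H.Adj e f ∧ t ∈ (f : Sym2 V)}

lemma mem_neighborVerts_coe {e : G.edgeSet} {t : V} :
    t ∈ neighborVerts H (e : Sym2 V) ↔ ∃ f, H.Adj e f ∧ t ∈ (f : Sym2 V) :=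
  ⟨fun ⟨_, f, he, hf, ht⟩ => ⟨f, Subtype.ext he ▸ hf, ht⟩, fun ⟨f, hf, ht⟩ => ⟨e, f, rfl, hf, ht⟩⟩

lemma exists_mem_mem_of_adj (hH : H ≤ G.lineGraph) {e f : G.edgeSet} (hef : H.Adj e f) :
    ∃ x ∈ (e : Sym2 V), x ∈ (f : Sym2 V) :=
  (lineGraph_adj_iff_exists.1 (hH hef)).2

lemma exists_triangle_of_mem_neighborVerts (hH : H ≤ G.lineGraph) (heq : IsEquivalenceGraph H)
    {e f : G.edgeSet} {u v w : V} (he : (e : Sym2 V) = s(v, u)) (hf : (f : Sym2 V) = s(v, w))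
    (hef : H.Adj e f) (hu : u ∈ neighborVerts H (e : Sym2 V)) :
    ∃ g : G.edgeSet, (g : Sym2 V) = s(u, w) ∧ H.Adj e g ∧ H.Adj f g := by
  obtain ⟨g, heg, hug⟩ := mem_neighborVerts_coe.1 hu
  have hvu : v ≠ u := G.ne_of_adj (G.mem_edgeSet.1 (he ▸ e.2))
  have hvg : v ∉ (g : Sym2 V) := fun hvg =>
    H.ne_of_adj heg (Subtype.ext (he.trans ((Sym2.mem_and_mem_iff hvu).1 ⟨hvg, hug⟩).symm))
  have hfg : H.Adj f g := heq f e g hef.symm heg (by rintro rfl; exact hvg (by simp [hf]))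
  have hwg : w ∈ (g : Sym2 V) := by
    obtain ⟨c, hcf, hcg⟩ := exists_mem_mem_of_adj hH hfg
    rcases Sym2.mem_iff.1 (hf ▸ hcf) with rfl | rfl
    exacts [absurd hcg hvg, hcg]
  have huw : u ≠ w := by
    rintro rfl
    exact H.ne_of_adj hef (Subtype.ext (he.trans hf.symm))
  exact ⟨g, (Sym2.mem_and_mem_iff huw).1 ⟨hug, hwg⟩, heg, hfg⟩

lemma neighborVerts_eq_of_triangle (hH : H ≤ G.lineGraph) (heq : IsEquivalenceGraph H)
    {e f g : G.edgeSet} {u v w : V} (he : (e : Sym2 V) = s(v, u)) (hf : (f : Sym2 V) = s(v, w))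
    (hg : (g : Sym2 V) = s(u, w)) (hef : H.Adj e f) (heg : H.Adj e g) :
    neighborVerts H (e : Sym2 V) = {u, v, w} := by
  have hvu : v ≠ u := G.ne_of_adj (G.mem_edgeSet.1 (he ▸ e.2))
  have hvw : v ≠ w := G.ne_of_adj (G.mem_edgeSet.1 (hf ▸ f.2))
  have huw : u ≠ w := G.ne_of_adj (G.mem_edgeSet.1 (hg ▸ g.2))
  ext t
  rw [mem_neighborVerts_coe]
  constructor
  · rintro ⟨h, heh, hth⟩
    by_cases hhf : h = f
    · subst hhf; simp_all
    by_cases hhg : h = g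
    · subst hhg; simp_all; tauto
    refine Sym2.mem_of_meets_triangle hvu hvw huw ?_ ?_ ?_ hth
    · exact he ▸ exists_mem_mem_of_adj hH heh.symm
    · exact hf ▸ exists_mem_mem_of_adj hH (heq h e f heh.symm hef hhf)
    · exact hg ▸ exists_mem_mem_of_adj hH (heq h e g heh.symm heg hhg)
  · rintro (rfl | rfl | rfl)
    exacts [⟨g, heg, by simp [hg]⟩, ⟨f, hef, by simp [hf]⟩, ⟨f, hef, by simp [hf]⟩]

end LineGraphCliques

section CliqueOrient

variable [LinearOrder V] {H : SimpleGraph G.edgeSet}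

noncomputable def orderRank (T : Set V) (x : V) : ℕ := (T ∩ Set.Iio x).ncard

lemma orderRank_lt_orderRank {T : Set V} (hT : T.Finite) {x y : V} (hx : x ∈ T) (hxy : x < y) :
    orderRank T x < orderRank T y := by
  refine Set.ncard_lt_ncard ?_ (hT.subset Set.inter_subset_left)
  exact (Set.ssubset_iff_of_subset (Set.inter_subset_inter_right _ (Set.Iio_subset_Iio hxy.le))).2
    ⟨x, ⟨hx, hxy⟩, fun h => lt_irrefl x h.2⟩

lemma orderRank_injOn {T : Set V} (hT : T.Finite) : Set.InjOn (orderRank T) T := by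
  intro x hx y hy h
  by_contra hne
  rcases lt_or_gt_of_ne hne with hlt | hlt
  · exact (orderRank_lt_orderRank hT hx hlt).ne h
  · exact (orderRank_lt_orderRank hT hy hlt).ne h.symm

lemma orderRank_lt_three {u v w : V} (x : V) (hx : x ∈ ({u, v, w} : Set V)) :
    orderRank {u, v, w} x < 3 := by
  have : orderRank {u, v, w} x < ({u, v, w} : Set V).ncard :=
    Set.ncard_lt_ncard (Set.ssubset_iff_of_subset Set.inter_subset_left |>.2
      ⟨x, hx, fun h => lt_irrefl x h.2⟩)
  exact this.trans_le ((Set.ncard_insert_le _ _).trans (by grw [Set.ncard_insert_le]; simp))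

/- The endpoints of an edge `z` lying in `neighborVerts H z` are the centre of its star clique or
both ends of its triangle clique. Such an endpoint is preferred as the tail, and among the two
ends of a triangle edge the vertex of rank `j` in the triangle. -/
open Classical in
noncomputable def priority (H : SimpleGraph G.edgeSet) (j : ℕ) (z : Sym2 V) (x : V) : ℕ :=
  if x ∉ neighborVerts H z then 2 else if orderRank (neighborVerts H z) x = j then 0 else 1

def cliqueOrient (H : SimpleGraph G.edgeSet) (j : ℕ) (x y : V) : Prop :=
  toLex (priority H j s(x, y) x, x) < toLex (priority H j s(x, y) y, y)

lemma isOrientation_cliqueOrient (H : SimpleGraph G.edgeSet) (j : ℕ) :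
    IsOrientation G (cliqueOrient H j) :=
  isOrientation_of_injective (fun z x => toLex (priority H j z x, x))
    fun _ _ _ h => (Prod.ext_iff.1 (toLex.injective h)).2

lemma cliqueOrient_of_priority_lt {j : ℕ} {x y : V}
    (h : priority H j s(x, y) x < priority H j s(x, y) y) : cliqueOrient H j x y :=
  Prod.Lex.toLex_lt_toLex.2 (Or.inl h)

lemma cliqueOrient_of_mem_of_notMem {j : ℕ} {x y : V} (hx : x ∈ neighborVerts H s(x, y))
    (hy : y ∉ neighborVerts H s(x, y)) : cliqueOrient H j x y := by
  apply cliqueOrient_of_priority_lt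
  simp only [priority, hx, hy, not_true_eq_false, not_false_eq_true, if_true, if_false]
  split_ifs <;> omega

lemma cliqueOrient_of_orderRank_eq {j : ℕ} {x y : V} {T : Set V}
    (hT : neighborVerts H s(x, y) = T) (hx : x ∈ T) (hy : y ∈ T) (hxj : orderRank T x = j)
    (hyj : orderRank T y ≠ j) : cliqueOrient H j x y := by
  apply cliqueOrient_of_priority_lt
  simp [priority, hT, hx, hy, hxj, hyj]

lemma exists_cliqueOrient_out (hH : H ≤ G.lineGraph) (heq : IsEquivalenceGraph H)
    {e f : G.edgeSet} {u v w : V} (he : (e : Sym2 V) = s(v, u)) (hf : (f : Sym2 V) = s(v, w))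
    (hef : H.Adj e f) : ∃ j < 3, cliqueOrient H j v u ∧ cliqueOrient H j v w := by
  have hve : v ∈ neighborVerts H s(v, u) := he ▸ mem_neighborVerts_coe.2 ⟨f, hef, by simp [hf]⟩
  have hvf : v ∈ neighborVerts H s(v, w) :=
    hf ▸ mem_neighborVerts_coe.2 ⟨e, hef.symm, by simp [he]⟩
  by_cases hu : u ∈ neighborVerts H s(v, u)
  · obtain ⟨g, hg, heg, hfg⟩ := exists_triangle_of_mem_neighborVerts hH heq he hf hef (he ▸ hu)
    have hTe : neighborVerts H s(v, u) = {u, v, w} :=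
      he ▸ neighborVerts_eq_of_triangle hH heq he hf hg hef heg
    have hTf : neighborVerts H s(v, w) = {u, v, w} := by
      rw [← hf, neighborVerts_eq_of_triangle hH heq hf he (hg.trans Sym2.eq_swap) hef.symm hfg]
      ext
      simp only [Set.mem_insert_iff, Set.mem_singleton_iff]
      tauto
    have hrank : Set.InjOn (orderRank {u, v, w}) {u, v, w} := orderRank_injOn (Set.toFinite _)
    have hvu : v ≠ u := G.ne_of_adj (G.mem_edgeSet.1 (he ▸ e.2))
    have hvw : v ≠ w := G.ne_of_adj (G.mem_edgeSet.1 (hf ▸ f.2))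
    refine ⟨orderRank {u, v, w} v, orderRank_lt_three v (by simp), ?_, ?_⟩
    · exact cliqueOrient_of_orderRank_eq hTe (by simp) (by simp) rfl
        fun h => hvu (hrank (by simp) (by simp) h.symm)
    · exact cliqueOrient_of_orderRank_eq hTf (by simp) (by simp) rfl
        fun h => hvw (hrank (by simp) (by simp) h.symm)
  · have hw : w ∉ neighborVerts H s(v, w) := fun hw => by
      obtain ⟨g, hg, -, heg⟩ :=
        exists_triangle_of_mem_neighborVerts hH heq hf he hef.symm (hf ▸ hw)
      exact hu (he ▸ mem_neighborVerts_coe.2 ⟨g, heg, by simp [hg]⟩)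
    exact ⟨0, by norm_num, cliqueOrient_of_mem_of_notMem hve hu,
      cliqueOrient_of_mem_of_notMem hvf hw⟩

end CliqueOrient

lemma IsEquivCover.exists_isOrientationCover {k : ℕ} {F : Fin k → SimpleGraph G.edgeSet}
    (hF : IsEquivCover G.lineGraph F) :
    ∃ m, ∃ O : Fin m → V → V → Prop, IsOrientationCover G O := by
  let _ : LinearOrder V := IsWellOrder.linearOrder WellOrderingRel
  let O : Bool ⊕ Fin k × Fin 3 → V → V → Prop :=
    Sum.elim (fun b x y => cond b (x < y) (y < x)) fun p => cliqueOrient (F p.1) p.2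
  refine exists_isOrientationCover_of_finite O ?_ fun v u w hu hw => ?_
  · rintro ((_ | _) | ⟨i, j⟩)
    exacts [isOrientation_of_injective (fun _ => OrderDual.toDual)
        fun _ => OrderDual.toDual.injective,
      isOrientation_of_injective (fun _ => id) fun _ => injective_id,
      isOrientation_cliqueOrient _ _]
  by_cases huw : u = w
  · subst huw
    rcases lt_or_gt_of_ne hu.ne with h | h
    exacts [⟨.inl true, h, h⟩, ⟨.inl false, h, h⟩]
  · have hL : G.lineGraph.Adj ⟨s(v, u), hu⟩ ⟨s(v, w), hw⟩ :=
      lineGraph_adj_iff_exists.2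
        ⟨fun h => huw (Sym2.congr_right.1 (congrArg Subtype.val h)), v, by simp, by simp⟩
    obtain ⟨i, hi⟩ := hF.2 _ _ hL
    obtain ⟨j, hj, hju, hjw⟩ := exists_cliqueOrient_out (hF.1 i).1 (hF.1 i).2 rfl rfl hi
    exact ⟨.inr (i, ⟨j, hj⟩), hju, hjw⟩

end

/-- for any graph `G`, `eq(L(G)) ≤ σ(G)`. -/
theorem stmt0 {V : Type*} (G : SimpleGraph V) :
    equivNum G.lineGraph ≤ orientCoverNum G := by
  rcases Set.eq_empty_or_nonempty {k | ∃ F : Fin k → V → V → Prop, IsOrientationCover G F}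
    with hσ | hσ
  · have : {k | ∃ F : Fin k → SimpleGraph G.edgeSet, IsEquivCover G.lineGraph F} = ∅ :=
      Set.eq_empty_of_forall_notMem fun k ⟨F, hF⟩ => by
        obtain ⟨m, O, hO⟩ := hF.exists_isOrientationCover
        exact hσ.subset ⟨O, hO⟩
    simp [equivNum, this]
  · obtain ⟨F, hF⟩ := Nat.sInf_mem hσ
    exact Nat.sInf_le ⟨_, hF.isEquivCover_lineGraph⟩
end

section
/- For any graph G with chromatic number k, σ(G) ≤ σ(K_k), where K_k is the complete graph on k vertices. -/
open SimpleGraph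

/-! A proper `k`-colouring is a homomorphism `G →g K_k`, and orientation covers pull back along
graph homomorphisms. The target being finite matters only because `sInf ∅ = 0`: every finite
graph has some orientation cover, e.g. the orientations of `K_n` making vertex `i` a source and
ordering all other edges by index. -/

namespace IsOrientationCover

variable {V W : Type*} {G : SimpleGraph V} {H : SimpleGraph W}

theorem comap {k : ℕ} {F : Fin k → W → W → Prop} (hF : IsOrientationCover H F) (f : G →g H) :
    IsOrientationCover G fun i u v => F i (f u) (f v) :=
  ⟨fun i _ _ huv => hF.1 i _ _ (f.map_adj huv),
    fun _ _ _ hvu hvw => hF.2 _ _ _ (f.map_adj hvu) (f.map_adj hvw)⟩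

end IsOrientationCover

def sourceOrientation {n : ℕ} (i : Fin n) (u v : Fin n) : Prop :=
  u = i ∨ (v ≠ i ∧ u < v)

theorem isOrientationCover_sourceOrientation (n : ℕ) :
    IsOrientationCover (⊤ : SimpleGraph (Fin n)) (sourceOrientation (n := n)) := by
  refine ⟨fun i u v huv => ?_, fun v u w _ _ => ⟨v, .inl rfl, .inl rfl⟩⟩
  have : u ≠ v := huv.ne
  grind [sourceOrientation]

theorem exists_isOrientationCover {W : Type*} [Finite W] (H : SimpleGraph W) :
    ∃ k, ∃ F : Fin k → W → W → Prop, IsOrientationCover H F := by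
  obtain ⟨n, ⟨e⟩⟩ := Finite.exists_equiv_fin W
  let f : H →g (⊤ : SimpleGraph (Fin n)) := ⟨e, fun huv => e.injective.ne huv.ne⟩
  exact ⟨n, _, (isOrientationCover_sourceOrientation n).comap f⟩

theorem orientCoverNum_le_of_hom {V W : Type*} [Finite W] {G : SimpleGraph V}
    {H : SimpleGraph W} (f : G →g H) : orientCoverNum G ≤ orientCoverNum H := by
  obtain ⟨k, F, hF⟩ := exists_isOrientationCover H
  refine csInf_le_csInf (OrderBot.bddBelow _) ⟨k, F, hF⟩ ?_
  rintro m ⟨F, hF⟩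
  exact ⟨_, hF.comap f⟩

theorem stmt5_general {V : Type*} (G : SimpleGraph V) (k : ℕ)
    (hk : G.chromaticNumber = k) :
    orientCoverNum G ≤ orientCoverNum (⊤ : SimpleGraph (Fin k)) := by
  have hcol : G.Colorable k := by
    rw [← chromaticNumber_le_iff_colorable, hk]
  obtain ⟨C⟩ := hcol
  exact orientCoverNum_le_of_hom C

/-- if `χ(G) = k`, then `σ(G) ≤ σ(K_k)`. -/
theorem stmt5 {V : Type*} [Fintype V] (G : SimpleGraph V) (k : ℕ)
    (hk : G.chromaticNumber = k) :
    orientCoverNum G ≤ orientCoverNum (⊤ : SimpleGraph (Fin k)) :=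
  stmt5_general G k hk
end

section
/- elb(K_4) = 2: the complete graph on 4 vertices admits an elbow covering of size 2, and has no elbow covering of size 1. -/
open SimpleGraph

/-
A linear order of the vertices and its reverse form an elbow covering of any graph: a directed
path `u → v → w` would have to be increasing in the first and decreasing in the second. Conversely,
a single orientation of a triangle always contains a directed path on two of its edges, so any
graph with a triangle, such as `K_4`, has no elbow covering of size one.
-/

section

variable {V : Type*}

theorem isOrientation_lt [LinearOrder V] (G : SimpleGraph V) : IsOrientation G (· < ·) :=
  fun _ _ h => ⟨fun h' => h'.not_gt, fun h' => lt_of_le_of_ne (not_lt.1 h') h.ne⟩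

theorem isOrientation_gt [LinearOrder V] (G : SimpleGraph V) : IsOrientation G (· > ·) :=
  fun _ _ h => ⟨fun h' => h'.not_gt, fun h' => lt_of_le_of_ne (not_lt.1 h') h.ne.symm⟩

theorem isElbowCover_lt_gt [LinearOrder V] (G : SimpleGraph V) :
    IsElbowCover G ![(· < ·), (· > ·)] := by
  refine ⟨Fin.forall_fin_two.2 ⟨isOrientation_lt G, isOrientation_gt G⟩, ?_⟩
  intro u v w _ _ _
  by_cases huv : u < v
  · exact ⟨1, fun h => h.1.not_gt huv⟩
  · exact ⟨0, fun h => huv h.1⟩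

theorem IsOrientation.exists_path_of_adj {G : SimpleGraph V} {o : V → V → Prop}
    (ho : IsOrientation G o) {a b c : V} (hab : G.Adj a b) (hbc : G.Adj b c) (hac : G.Adj a c) :
    ∃ x y z, G.Adj x y ∧ G.Adj y z ∧ x ≠ z ∧ o x y ∧ o y z := by
  wlog h : o a b generalizing a b
  · exact this hab.symm hac hbc ((ho b a hab.symm).2 h)
  by_cases hbc' : o b c
  · exact ⟨a, b, c, hab, hbc, hac.ne, h, hbc'⟩
  by_cases hca : o c a
  · exact ⟨c, a, b, hac.symm, hab, hbc.ne.symm, hca, h⟩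
  · exact ⟨a, c, b, hac, hbc.symm, hab.ne, (ho a c hac).2 hca, (ho c b hbc.symm).2 hbc'⟩

theorem IsElbowCover.two_le {G : SimpleGraph V} {k : ℕ} {F : Fin k → V → V → Prop}
    (hF : IsElbowCover G F) {a b c : V} (hab : G.Adj a b) (hbc : G.Adj b c) (hac : G.Adj a c) :
    2 ≤ k := by
  by_contra! hk
  cases k with
  | zero => exact (hF.2 a b c hab hbc hac.ne).elim fun i _ => i.elim0
  | succ k =>
    obtain rfl : k = 0 := by omega
    obtain ⟨x, y, z, hxy, hyz, hxz, h⟩ := (hF.1 0).exists_path_of_adj hab hbc hac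
    obtain ⟨i, hi⟩ := hF.2 x y z hxy hyz hxz
    exact hi (Fin.fin_one_eq_zero i ▸ h)

theorem elbowNum_eq_two [LinearOrder V] {G : SimpleGraph V} {a b c : V} (hab : G.Adj a b)
    (hbc : G.Adj b c) (hac : G.Adj a c) : elbowNum G = 2 :=
  le_antisymm (Nat.sInf_le ⟨_, isElbowCover_lt_gt G⟩)
    (le_csInf ⟨2, _, isElbowCover_lt_gt G⟩ fun _ ⟨_, hF⟩ => hF.two_le hab hbc hac)

end

/-- `elb(K_4) = 2`: there is an elbow covering of `K_4` of size 2,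
and none of size 1. -/
theorem stmt9 :
    elbowNum (⊤ : SimpleGraph (Fin 4)) = 2 ∧
    (∃ F : Fin 2 → (Fin 4 → Fin 4 → Prop), IsElbowCover (⊤ : SimpleGraph (Fin 4)) F) ∧
    ¬ ∃ F : Fin 1 → (Fin 4 → Fin 4 → Prop), IsElbowCover (⊤ : SimpleGraph (Fin 4)) F := by
  have h01 : (⊤ : SimpleGraph (Fin 4)).Adj 0 1 := by decide
  have h12 : (⊤ : SimpleGraph (Fin 4)).Adj 1 2 := by decide
  have h02 : (⊤ : SimpleGraph (Fin 4)).Adj 0 2 := by decide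
  refine ⟨elbowNum_eq_two h01 h12 h02, ⟨_, isElbowCover_lt_gt ⊤⟩, ?_⟩
  rintro ⟨F, hF⟩
  exact absurd (hF.two_le h01 h12 h02) (by decide)
end

section
/- Every bipartite graph with at least one edge has orientation covering number at most 2 (and exactly 2 if it has an edge). -/
open SimpleGraph

/-! Colour the graph properly with two colours; in the `i`-th orientation every edge points away
from its endpoint of colour `i`. Then every vertex has all its edges directed outward in the
orientation indexed by its own colour, so two orientations suffice. Conversely, covering the pair
`(ab, ab)` at `a` and the pair `(ba, ba)` at `b` needs two orientations directing the edge `ab`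
in opposite ways. -/

namespace SimpleGraph.Coloring

variable {V : Type*} {G : SimpleGraph V}

def colorOrientations (C : G.Coloring (Fin 2)) : Fin 2 → V → V → Prop :=
  fun i u _ => C u = i

theorem isOrientationCover_colorOrientations (C : G.Coloring (Fin 2)) :
    IsOrientationCover G C.colorOrientations := by
  refine ⟨fun i u v huv => ?_, fun v u w _ _ => ⟨C v, rfl, rfl⟩⟩
  have hne : C u ≠ C v := C.valid huv
  simp only [colorOrientations]
  omega

end SimpleGraph.Coloring

theorem IsOrientationCover.two_le_of_adj {V : Type*} {G : SimpleGraph V} {k : ℕ}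
    {F : Fin k → V → V → Prop} (hF : IsOrientationCover G F) {a b : V} (hab : G.Adj a b) :
    2 ≤ k := by
  obtain ⟨i, hi, -⟩ := hF.2 a b b hab hab
  obtain ⟨j, hj, -⟩ := hF.2 b a a hab.symm hab.symm
  have hij : i ≠ j := fun h => (hF.1 i a b hab).mp hi (h ▸ hj)
  exact Fin.nontrivial_iff_two_le.mp ⟨⟨i, j, hij⟩⟩

/-- every bipartite graph with at least one edge has orientation
covering number exactly 2. -/
theorem stmt12 {V : Type*} (G : SimpleGraph V) (hbip : G.Colorable 2)
    (hedge : G.edgeSet.Nonempty) :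
    orientCoverNum G = 2 := by
  obtain ⟨C⟩ := hbip
  obtain ⟨a, b, hab⟩ := G.ne_bot_iff_exists_adj.mp (G.edgeSet_nonempty.mp hedge)
  have hcover : 2 ∈ {k | ∃ F : Fin k → V → V → Prop, IsOrientationCover G F} :=
    ⟨_, C.isOrientationCover_colorOrientations⟩
  refine le_antisymm (Nat.sInf_le hcover) (le_csInf ⟨2, hcover⟩ ?_)
  rintro k ⟨F, hF⟩
  exact hF.two_le_of_adj hab
end

section
/- For any graph G with χ(G) ≥ 2, ⌈log₂ log₂ χ(G)⌉ + 1 ≤ σ(G) ≤ 2⌈log₂ log₂ χ(G)⌉ + 2. -/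
open SimpleGraph

/-! Upper bound: colour `G` properly by bit strings `x v : J → Bool`. Every edge `uv` gets a
coordinate `j` at which `x u` and `x v` differ, chosen symmetrically in `u` and `v`; any
`f : J → Bool` orients `u → v` when `x u j = f j`. If `f` ranges over a family taking every
prescribed pair of values at every pair of distinct coordinates, these orientations cover `G`.
The two constants together with `j ↦ y j l xor b`, for an injective code `y : J → L → Bool`,
form such a family of size `2 |L| + 2`; take `|J| = ⌈log₂ χ⌉` and `|L| = ⌈log₂ |J|⌉`.

Lower bound: for a cover `F` with `k` orientations, colour `v` by the set of out-patterns
`(F · v w)` of its edges. If `u ~ v` and `A` is the pattern of `uv` at `u`, then `A` is not a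
pattern at `v` (a common out-orientation of `vu` and `vw` would direct `uv` both ways), while
`¬A` is; so this colouring is proper, and normalising the first coordinate leaves
`2 ^ 2 ^ (k - 1)` colours. -/

section

variable {V : Type*} {G : SimpleGraph V}

theorem exists_isOrientationCover_of_card {ι : Type*} [Fintype ι] (F : ι → V → V → Prop)
    (horient : ∀ i, IsOrientation G (F i))
    (hcover : ∀ v u w, G.Adj v u → G.Adj v w → ∃ i, F i v u ∧ F i v w) :
    ∃ F' : Fin (Fintype.card ι) → V → V → Prop, IsOrientationCover G F' := by
  let e := Fintype.equivFin ι
  refine ⟨fun i => F (e.symm i), fun i => horient _, fun v u w hvu hvw => ?_⟩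
  obtain ⟨i, hi⟩ := hcover v u w hvu hvw
  exact ⟨e i, by simpa using hi⟩

section Upper

variable {J L : Type*}

def xorCodes (y : J → L → Bool) : Bool ⊕ (L × Bool) → J → Bool
  | .inl b => fun _ => b
  | .inr (l, b) => fun j => xor (y j l) b

theorem exists_xorCodes_eq {y : J → L → Bool} (hy : Function.Injective y) (j₁ j₂ : J)
    (a₁ a₂ : Bool) (h : j₁ = j₂ → a₁ = a₂) :
    ∃ i, xorCodes y i j₁ = a₁ ∧ xorCodes y i j₂ = a₂ := by
  by_cases ha : a₁ = a₂
  · exact ⟨.inl a₁, rfl, ha⟩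
  obtain ⟨l, hl⟩ := Function.ne_iff.mp (hy.ne (mt h ha))
  refine ⟨.inr (l, xor (y j₁ l) a₁), ?_, ?_⟩ <;> simp only [xorCodes]
  · simp
  · revert ha hl
    cases y j₁ l <;> cases y j₂ l <;> cases a₁ <;> cases a₂ <;> simp

variable [Nonempty J]

noncomputable def sepIdx (x : V → J → Bool) (u v : V) : J :=
  Classical.epsilon fun j => x u j ≠ x v j

theorem sepIdx_comm (x : V → J → Bool) (u v : V) : sepIdx x u v = sepIdx x v u := by
  simp only [sepIdx, ne_comm]

theorem apply_sepIdx_ne {x : V → J → Bool} {u v : V} (h : x u ≠ x v) :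
    x u (sepIdx x u v) ≠ x v (sepIdx x u v) :=
  Classical.epsilon_spec (Function.ne_iff.mp h)

def orientBy (x : V → J → Bool) (f : J → Bool) (u v : V) : Prop :=
  x u (sepIdx x u v) = f (sepIdx x u v)

theorem isOrientation_orientBy (C : G.Coloring (J → Bool)) (f : J → Bool) :
    IsOrientation G (orientBy C f) := by
  intro u v huv
  have hne := apply_sepIdx_ne (C.valid huv)
  unfold orientBy
  rw [sepIdx_comm C v u]
  revert hne
  cases C u (sepIdx C u v) <;> cases C v (sepIdx C u v) <;> cases f (sepIdx C u v) <;> simp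

theorem exists_orientBy_and_orientBy {ι : Type*} (C : G.Coloring (J → Bool)) (f : ι → J → Bool)
    (hf : ∀ j₁ j₂ a₁ a₂, (j₁ = j₂ → a₁ = a₂) → ∃ i, f i j₁ = a₁ ∧ f i j₂ = a₂)
    (v u w : V) : ∃ i, orientBy C (f i) v u ∧ orientBy C (f i) v w := by
  obtain ⟨i, hu, hw⟩ := hf (sepIdx C v u) (sepIdx C v w) _ _ fun h => congrArg (C v) h
  exact ⟨i, hu.symm, hw.symm⟩

theorem exists_isOrientationCover_of_coloring [Fintype L] (C : G.Coloring (J → Bool))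
    {y : J → L → Bool} (hy : Function.Injective y) :
    ∃ F : Fin (2 * Fintype.card L + 2) → V → V → Prop, IsOrientationCover G F := by
  have h := exists_isOrientationCover_of_card (fun i => orientBy C (xorCodes y i))
    (fun i => isOrientation_orientBy C _)
    (fun v u w _ _ => exists_orientBy_and_orientBy C _ (exists_xorCodes_eq hy) v u w)
  have hcard : Fintype.card (Bool ⊕ (L × Bool)) = 2 * Fintype.card L + 2 := by
    simp only [Fintype.card_sum, Fintype.card_prod, Fintype.card_bool]
    ring
  rwa [hcard] at h

end Upper

theorem exists_isOrientationCover_of_colorable {n : ℕ} (hG : G.Colorable n) (hn : 2 ≤ n) :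
    ∃ F : Fin (2 * Nat.clog 2 (Nat.clog 2 n) + 2) → V → V → Prop, IsOrientationCover G F := by
  set s := Nat.clog 2 n
  set t := Nat.clog 2 s
  have : Nonempty (Fin s) := Fin.pos_iff_nonempty.mp (Nat.clog_pos one_lt_two hn)
  let C : G.Coloring (Fin s → Bool) := hG.toColoring (by simpa using Nat.le_pow_clog one_lt_two n)
  obtain ⟨y⟩ : Nonempty (Fin s ↪ (Fin t → Bool)) :=
    Function.Embedding.nonempty_of_card_le (by simpa using Nat.le_pow_clog one_lt_two s)
  have h := exists_isOrientationCover_of_coloring C y.injective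
  rwa [Fintype.card_fin] at h

section Lower

variable {k : ℕ} {F : Fin k → V → V → Prop}

def outPatterns (G : SimpleGraph V) (F : Fin k → V → V → Prop) (v : V) : Set (Fin k → Prop) :=
  {A | ∃ w, G.Adj v w ∧ (F · v w) = A}

theorem IsOrientationCover.outPattern_notMem (hF : IsOrientationCover G F) {u v : V}
    (huv : G.Adj u v) : (F · u v) ∉ outPatterns G F v := by
  rintro ⟨w, hvw, hA⟩
  obtain ⟨i, hvu, hvw'⟩ := hF.2 v u w huv.symm hvw
  exact (hF.1 i v u huv.symm).mp hvu (congrFun hA i ▸ hvw')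

theorem IsOrientationCover.pos (hF : IsOrientationCover G F) {u v : V} (huv : G.Adj u v) :
    0 < k :=
  (hF.2 u v v huv huv).choose.pos

def patternColor {m : ℕ} (G : SimpleGraph V) (F : Fin (m + 1) → V → V → Prop) (v : V) :
    (Fin m → Prop) → Prop :=
  fun t => Fin.cons False t ∈ outPatterns G F v

theorem IsOrientationCover.patternColor_ne_of_not_apply_zero {m : ℕ} {F : Fin (m + 1) → V → V → Prop}
    (hF : IsOrientationCover G F) {u v : V} (huv : G.Adj u v) (h0 : ¬ F 0 u v) :
    patternColor G F u ≠ patternColor G F v := by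
  intro h
  have hcons : Fin.cons False (Fin.tail (F · u v)) = (F · u v) := by
    rw [← eq_false h0]
    exact Fin.cons_self_tail (F · u v)
  have := congrFun h (Fin.tail (F · u v))
  simp only [patternColor, hcons] at this
  exact hF.outPattern_notMem huv (this ▸ ⟨v, huv, rfl⟩)

def IsOrientationCover.patternColoring {m : ℕ} {F : Fin (m + 1) → V → V → Prop}
    (hF : IsOrientationCover G F) : G.Coloring ((Fin m → Prop) → Prop) :=
  Coloring.mk (patternColor G F) fun {u v} huv => by
    by_cases h0 : F 0 u v
    · exact (hF.patternColor_ne_of_not_apply_zero huv.symm ((hF.1 0 u v huv).mp h0)).symm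
    · exact hF.patternColor_ne_of_not_apply_zero huv h0

theorem IsOrientationCover.colorable (hF : IsOrientationCover G F) :
    G.Colorable (2 ^ 2 ^ (k - 1)) := by
  cases k with
  | zero =>
    exact (Coloring.mk (fun _ => ()) fun huv => (hF.2 _ _ _ huv huv).choose.elim0).colorable.mono
      (by simp)
  | succ m => simpa [Fintype.card_fun, Fintype.card_prop] using hF.patternColoring.colorable

end Lower

end

theorem stmt13_general {V : Type*} (G : SimpleGraph V) (n : ℕ)
    (hn : G.chromaticNumber = n) (h2 : 2 ≤ n) :
    Nat.clog 2 (Nat.clog 2 n) + 1 ≤ orientCoverNum G ∧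
      orientCoverNum G ≤ 2 * Nat.clog 2 (Nat.clog 2 n) + 2 := by
  have hcover := exists_isOrientationCover_of_colorable
    (chromaticNumber_le_iff_colorable.mp hn.le) h2
  refine ⟨?_, Nat.sInf_le hcover⟩
  obtain ⟨F, hF⟩ : ∃ F : Fin (orientCoverNum G) → V → V → Prop, IsOrientationCover G F :=
    Nat.sInf_mem (s := {k | ∃ F : Fin k → V → V → Prop, IsOrientationCover G F}) ⟨_, hcover⟩
  obtain ⟨u, v, huv⟩ := ne_bot_iff_exists_adj.mp
    (two_le_chromaticNumber_iff_ne_bot.mp (by rw [hn]; exact_mod_cast h2))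
  have hle : n ≤ 2 ^ 2 ^ (orientCoverNum G - 1) := by
    exact_mod_cast hn ▸ hF.colorable.chromaticNumber_le
  have hpos := hF.pos huv
  have hlog := Nat.clog_le_of_le_pow (Nat.clog_le_of_le_pow hle)
  omega

/-- if `χ(G) ≥ 2`, then
`⌈log₂ log₂ χ(G)⌉ + 1 ≤ σ(G) ≤ 2⌈log₂ log₂ χ(G)⌉ + 2`. -/
theorem stmt13 {V : Type*} [Fintype V] (G : SimpleGraph V) (n : ℕ)
    (hn : G.chromaticNumber = n) (h2 : 2 ≤ n) :
    Nat.clog 2 (Nat.clog 2 n) + 1 ≤ orientCoverNum G ∧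
      orientCoverNum G ≤ 2 * Nat.clog 2 (Nat.clog 2 n) + 2 :=
  stmt13_general G n hn h2
end

section
/- If G is a graph with σ(G) = k ≥ 3, then χ(G) ≤ k + 2^(2^(k-1) - k - 1). -/
open SimpleGraph

/-!
Label the edge `vu` at `v` by the set of orientations of a covering that direct it out of `v`.
The labels at `v` form an intersecting family of subsets of `Fin k`, and the two labels of an
edge are complementary. Extending the family at each vertex to a maximal intersecting family
(of size `2^(k-1)`) therefore colours `G` properly. At most `k` maximal intersecting families
are stars, i.e. contain a singleton; any other one contains every set whose complement has at
most one element and no set of at most one element, so it is determined by which of the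
`2^(k-1) - k - 1` sets through a fixed point `z`, of size between `2` and `k - 2`, it contains.
-/

open Finset SimpleGraph

namespace Finset

section BooleanAlgebra

variable {β : Type*} [BooleanAlgebra β] [Fintype β] {s : Finset β}

/-- Equivalently a maximal intersecting family, by `Set.Intersecting.is_max_iff_card_eq`. -/
def IsMaxIntersecting (s : Finset β) : Prop :=
  (s : Set β).Intersecting ∧ 2 * #s = Fintype.card β

theorem IsMaxIntersecting.mem_or_compl_mem (hs : s.IsMaxIntersecting) (a : β) :
    a ∈ s ∨ aᶜ ∈ s := by
  have huniv : s.disjUnion (s.map ⟨compl, compl_injective⟩) hs.1.disjoint_map_compl = univ :=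
    eq_univ_of_card _ (by rw [card_disjUnion, card_map, ← two_mul, hs.2])
  have ha := mem_univ a
  rw [← huniv] at ha
  simpa [compl_eq_comm] using ha

theorem IsMaxIntersecting.compl_mem_iff (hs : s.IsMaxIntersecting) {a : β} :
    aᶜ ∈ s ↔ a ∉ s :=
  ⟨hs.1.notMem, (hs.mem_or_compl_mem a).resolve_left⟩

end BooleanAlgebra

theorem card_powerset_filter_one_le_card_add_two_le {ι : Type*} (s : Finset ι) (hs : 2 ≤ #s) :
    #{B ∈ s.powerset | 1 ≤ #B ∧ #B + 2 ≤ #s} = 2 ^ #s - #s - 2 := by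
  obtain ⟨p, hp⟩ : ∃ p, #s = p + 2 := ⟨#s - 2, by omega⟩
  have htotal := Nat.sum_range_choose (p + 2)
  rw [card_filter, sum_powerset_apply_card (fun j => if 1 ≤ j ∧ j + 2 ≤ #s then 1 else 0), hp]
  rw [sum_range_succ, sum_range_succ, sum_range_succ'] at htotal ⊢
  have hmiddle : ∀ i ∈ range p,
      (p + 2).choose (i + 1) • (if 1 ≤ i + 1 ∧ i + 1 + 2 ≤ p + 2 then 1 else 0)
        = (p + 2).choose (i + 1) := fun i hi => by
    rw [if_pos (by simp only [mem_range] at hi; omega), smul_eq_mul, mul_one]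
  rw [sum_congr rfl hmiddle]
  simp only [Nat.choose_zero_right, Nat.choose_succ_self_right, Nat.choose_self, smul_eq_mul,
    mul_ite, mul_one, mul_zero] at htotal ⊢
  split_ifs <;> omega

variable {α : Type*} [DecidableEq α] {𝒜 ℬ : Finset (Finset α)}

theorem two_le_card_of_mem_of_forall_singleton_notMem (h𝒜 : (𝒜 : Set (Finset α)).Intersecting)
    (hsing : ∀ i, {i} ∉ 𝒜) {a : Finset α} (ha : a ∈ 𝒜) : 2 ≤ #a := by
  by_contra! hcard
  obtain h | h : #a = 0 ∨ #a = 1 := by omega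
  · rw [card_eq_zero] at h
    subst h
    exact h𝒜.bot_notMem ha
  · obtain ⟨i, rfl⟩ := card_eq_one.1 h
    exact hsing i ha

variable [Fintype α]

open scoped Classical in
noncomputable def maxIntersectingFamilies (α : Type*) [Fintype α] [DecidableEq α] :
    Finset (Finset (Finset α)) :=
  univ.filter IsMaxIntersecting

theorem mem_maxIntersectingFamilies :
    𝒜 ∈ maxIntersectingFamilies α ↔ 𝒜.IsMaxIntersecting := by
  simp [maxIntersectingFamilies]

theorem IsMaxIntersecting.eq_filter_mem_of_singleton_mem (h𝒜 : 𝒜.IsMaxIntersecting) {i : α}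
    (hi : {i} ∈ 𝒜) : 𝒜 = univ.filter (i ∈ ·) := by
  ext a
  rw [mem_filter, and_iff_right (mem_univ a)]
  refine ⟨fun ha => ?_, fun hia => ?_⟩
  · by_contra hia
    exact h𝒜.1 ha hi (disjoint_singleton_right.2 hia)
  · by_contra ha
    exact h𝒜.1 (h𝒜.compl_mem_iff.2 ha) hi (disjoint_singleton_right.2 (notMem_compl.2 hia))

theorem IsMaxIntersecting.mem_of_card_compl_le_one (h𝒜 : 𝒜.IsMaxIntersecting)
    (hsing : ∀ i, {i} ∉ 𝒜) {a : Finset α} (ha : #aᶜ ≤ 1) : a ∈ 𝒜 := by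
  by_contra h
  have := two_le_card_of_mem_of_forall_singleton_notMem h𝒜.1 hsing (h𝒜.compl_mem_iff.2 h)
  omega

def middleSetsContaining (z : α) : Finset (Finset α) :=
  univ.filter fun a => z ∈ a ∧ 2 ≤ #a ∧ 2 ≤ #aᶜ

theorem IsMaxIntersecting.eq_of_inter_middleSetsContaining_eq (h𝒜 : 𝒜.IsMaxIntersecting)
    (h𝒜sing : ∀ i, {i} ∉ 𝒜) (hℬ : ℬ.IsMaxIntersecting) (hℬsing : ∀ i, {i} ∉ ℬ) (z : α)
    (h : 𝒜 ∩ middleSetsContaining z = ℬ ∩ middleSetsContaining z) : 𝒜 = ℬ := by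
  have hcontaining : ∀ a, z ∈ a → (a ∈ 𝒜 ↔ a ∈ ℬ) := by
    intro a hz
    by_cases hsmall : #a ≤ 1
    · refine iff_of_false (fun ha => ?_) (fun ha => ?_)
      · have := two_le_card_of_mem_of_forall_singleton_notMem h𝒜.1 h𝒜sing ha; omega
      · have := two_le_card_of_mem_of_forall_singleton_notMem hℬ.1 hℬsing ha; omega
    by_cases hlarge : #aᶜ ≤ 1
    · exact iff_of_true (h𝒜.mem_of_card_compl_le_one h𝒜sing hlarge)
        (hℬ.mem_of_card_compl_le_one hℬsing hlarge)
    have haR : a ∈ middleSetsContaining z := by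
      simp only [middleSetsContaining, mem_filter, mem_univ, true_and]
      exact ⟨hz, by omega, by omega⟩
    simpa [haR] using congrArg (a ∈ ·) h
  ext a
  by_cases hz : z ∈ a
  · exact hcontaining a hz
  · rw [← not_iff_not, ← h𝒜.compl_mem_iff, ← hℬ.compl_mem_iff]
    exact hcontaining _ (mem_compl.2 hz)

theorem card_middleSetsContaining_le (hα : 3 ≤ Fintype.card α) (z : α) :
    #(middleSetsContaining z) ≤ 2 ^ (Fintype.card α - 1) - Fintype.card α - 1 := by
  have hcard : #(univ.erase z) = Fintype.card α - 1 := by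
    rw [card_erase_of_mem (mem_univ z), card_univ]
  calc #(middleSetsContaining z)
      ≤ #{B ∈ (univ.erase z).powerset | 1 ≤ #B ∧ #B + 2 ≤ #(univ.erase z)} := by
        refine card_le_card_of_injOn (·.erase z) (fun a ha => ?_)
          ((erase_injOn' z).mono fun a ha => (mem_filter.1 ha).2.1)
        simp only [middleSetsContaining, coe_filter, mem_univ, true_and, Set.mem_ofPred_eq] at ha
        obtain ⟨hz, h₁, h₂⟩ := ha
        rw [card_compl] at h₂
        simp only [coe_filter, mem_powerset, Set.mem_ofPred_eq, hcard, card_erase_of_mem hz]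
        exact ⟨erase_subset_erase z (subset_univ a), by omega, by omega⟩
    _ = 2 ^ (Fintype.card α - 1) - Fintype.card α - 1 := by
        rw [card_powerset_filter_one_le_card_add_two_le _ (by omega), hcard]
        omega

theorem card_maxIntersectingFamilies_le (hα : 3 ≤ Fintype.card α) :
    #(maxIntersectingFamilies α) ≤
      Fintype.card α + 2 ^ (2 ^ (Fintype.card α - 1) - Fintype.card α - 1) := by
  obtain ⟨z⟩ : Nonempty α := Fintype.card_pos_iff.1 (by omega)
  rw [← card_filter_add_card_filter_not (p := fun 𝒜 : Finset (Finset α) => ∃ i, {i} ∈ 𝒜)]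
  refine add_le_add ?_ ?_
  · calc _ ≤ #(univ.image fun i : α => univ.filter (i ∈ ·)) := by
          refine card_le_card fun 𝒜 h𝒜 => ?_
          obtain ⟨h𝒜, i, hi⟩ := mem_filter.1 h𝒜
          exact mem_image.2 ⟨i, mem_univ i,
            ((mem_maxIntersectingFamilies.1 h𝒜).eq_filter_mem_of_singleton_mem hi).symm⟩
      _ ≤ Fintype.card α := card_image_le
  · calc _ ≤ #(middleSetsContaining z).powerset := by
          refine card_le_card_of_injOn (· ∩ middleSetsContaining z)
            (fun 𝒜 _ => mem_powerset.2 inter_subset_right) fun 𝒜 h𝒜 ℬ hℬ h => ?_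
          simp only [coe_filter, mem_maxIntersectingFamilies, not_exists, Set.mem_ofPred_eq]
            at h𝒜 hℬ
          exact h𝒜.1.eq_of_inter_middleSetsContaining_eq h𝒜.2 hℬ.1 hℬ.2 z h
      _ ≤ _ := by
          rw [card_powerset]
          exact Nat.pow_le_pow_right two_pos (card_middleSetsContaining_le hα z)

end Finset

theorem SimpleGraph.colorable_card_maxIntersectingFamilies {V α : Type*} [Fintype α]
    [DecidableEq α] [Nonempty α] (G : SimpleGraph V) (L : V → V → Finset α)
    (hL : ∀ v u w, G.Adj v u → G.Adj v w → ¬Disjoint (L v u) (L v w))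
    (hLcompl : ∀ u v, G.Adj u v → L u v = (L v u)ᶜ) :
    G.Colorable #(maxIntersectingFamilies α) := by
  classical
  have hextend : ∀ v, ∃ 𝒜 : Finset (Finset α), (∀ u, G.Adj v u → L v u ∈ 𝒜) ∧
      𝒜.IsMaxIntersecting := by
    intro v
    have hint : ((univ.filter fun a => ∃ u, G.Adj v u ∧ L v u = a : Finset (Finset α)) :
        Set (Finset α)).Intersecting := by
      rintro _ ha _ hb
      simp only [coe_filter, mem_univ, true_and, Set.mem_ofPred_eq] at ha hb
      obtain ⟨u, hu, rfl⟩ := ha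
      obtain ⟨w, hw, rfl⟩ := hb
      exact hL v u w hu hw
    obtain ⟨𝒜, hsub, hcard, h𝒜⟩ := hint.exists_card_eq
    exact ⟨𝒜, fun u hu => hsub (by simpa using ⟨u, hu, rfl⟩), h𝒜, hcard⟩
  choose M hLM hM using hextend
  refine (Coloring.mk (fun v => (⟨M v, mem_maxIntersectingFamilies.2 (hM v)⟩ :
    maxIntersectingFamilies α)) fun {u v} huv hMuv => ?_).colorable.mono (by simp)
  have hMeq : M u = M v := congrArg Subtype.val hMuv
  have hLuv : L u v ∈ M v := hMeq ▸ hLM u v huv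
  exact (hM v).1.compl_notMem (hLM v u huv.symm) (hLcompl u v huv ▸ hLuv)

theorem orientCoverNum_mem {V : Type*} {G : SimpleGraph V} (h : 0 < orientCoverNum G) :
    ∃ F : Fin (orientCoverNum G) → V → V → Prop, IsOrientationCover G F :=
  Nat.sInf_mem (Nat.nonempty_of_pos_sInf h)

theorem IsOrientationCover.colorable_s14 {V : Type*} {G : SimpleGraph V} {k : ℕ}
    {F : Fin k → V → V → Prop} (hF : IsOrientationCover G F) (hk : 0 < k) :
    G.Colorable #(maxIntersectingFamilies (Fin k)) := by
  classical
  have : Nonempty (Fin k) := Fin.pos_iff_nonempty.1 hk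
  refine G.colorable_card_maxIntersectingFamilies (fun v u => univ.filter (F · v u))
    (fun v u w hu hw => ?_) fun u v huv => ?_
  · obtain ⟨i, hiu, hiw⟩ := hF.2 v u w hu hw
    exact not_disjoint_iff.2 ⟨i, by simpa using hiu, by simpa using hiw⟩
  · ext i
    simpa using hF.1 i u v huv

/-- if `σ(G) = k ≥ 3`, then `χ(G) ≤ k + 2^(2^(k-1) - k - 1)`. -/
theorem stmt14 {V : Type*} (G : SimpleGraph V) (k : ℕ)
    (hk : orientCoverNum G = k) (h3 : 3 ≤ k) :
    G.chromaticNumber ≤ ((k + 2 ^ (2 ^ (k - 1) - k - 1) : ℕ) : ℕ∞) := by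
  subst hk
  obtain ⟨F, hF⟩ := orientCoverNum_mem (G := G) (by omega)
  refine ((hF.colorable_s14 (by omega)).mono ?_).chromaticNumber_le
  simpa using card_maxIntersectingFamilies_le (α := Fin (orientCoverNum G)) (by simpa using h3)
end

section
/- In any orientation covering of a graph G of minimum degree at least 2 using k orientations, for each i ∈ [k] the set S_i of vertices v having a neighbor u such that the edge uv is directed out of v in orientation i only, is a stable (independent) set. -/
open SimpleGraph

theorem IsOrientationCover.out_of_unique_out {V : Type*} {G : SimpleGraph V} {k : ℕ}
    {F : Fin k → (V → V → Prop)} (hF : IsOrientationCover G F) {i : Fin k} {v u w : V}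
    (hvu : G.Adj v u) (hu : {j | F j v u} = ({i} : Set (Fin k))) (hvw : G.Adj v w) :
    F i v w := by
  obtain ⟨j, hjvu, hjvw⟩ := hF.2 v u w hvu hvw
  have hji : j ∈ ({i} : Set (Fin k)) := hu ▸ hjvu
  rwa [Set.mem_singleton_iff.mp hji] at hjvw

theorem stmt15_general {V : Type*} (G : SimpleGraph V)
    (k : ℕ) (F : Fin k → (V → V → Prop))
    (hF : IsOrientationCover G F) :
    ∀ i : Fin k, ∀ v w : V,
      (∃ u, G.Adj v u ∧ {j | F j v u} = ({i} : Set (Fin k))) →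
      (∃ u, G.Adj w u ∧ {j | F j w u} = ({i} : Set (Fin k))) →
      ¬ G.Adj v w := by
  rintro i v w ⟨u, hvu, hu⟩ ⟨x, hwx, hx⟩ hvw
  exact (hF.1 i v w hvw).mp (hF.out_of_unique_out hvu hu hvw)
    (hF.out_of_unique_out hwx hx hvw.symm)

/-- in any orientation covering of a graph of minimum degree at
least 2, each set `S_i = {v | ∃ u, o(v,uv) = {i}}` is a stable set. -/
theorem stmt15 {V : Type*} [Fintype V] (G : SimpleGraph V) [DecidableRel G.Adj]
    (hdeg : ∀ v, 2 ≤ G.degree v) (k : ℕ) (F : Fin k → (V → V → Prop))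
    (hF : IsOrientationCover G F) :
    ∀ i : Fin k, ∀ v w : V,
      (∃ u, G.Adj v u ∧ {j | F j v u} = ({i} : Set (Fin k))) →
      (∃ u, G.Adj w u ∧ {j | F j w u} = ({i} : Set (Fin k))) →
      ¬ G.Adj v w :=
  stmt15_general G k F hF
end

section
/- σ(K_4) = 3: the complete graph on 4 vertices has an orientation covering of size 3 and none of size 2. -/
/-!
Upper bound: each of three transitive tournaments of `K_4` has one of the vertices `0, 1, 2`
as its source and `3` as the second vertex, which already covers every pair of edges at every
vertex. Lower bound: with only two orientations, a vertex `v` must be a source in one of them,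
since otherwise there are neighbours `u₀, u₁` with `vuᵢ` not directed out of `v` in orientation
`i`, and the pair `vu₀, vu₁` is not covered. By pigeonhole two of the vertices of `K_n`, `n ≥ 3`,
are then sources of the same orientation, impossible as they are adjacent.
-/

open SimpleGraph

variable {V : Type*} {G : SimpleGraph V}

theorem IsOrientation.not_and {o : V → V → Prop} (ho : IsOrientation G o) {u v : V}
    (huv : G.Adj u v) : ¬ (o u v ∧ o v u) :=
  fun ⟨h, h'⟩ => (ho u v huv).mp h h'

theorem isOrientation_of_injective_s17 {α : Type*} [LinearOrder α] {r : V → α}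
    (hr : Function.Injective r) : IsOrientation G (fun u v => r u < r v) := fun _ _ huv =>
  ⟨not_lt_of_gt, fun h => (le_of_not_gt h).lt_of_ne (hr.ne huv.ne)⟩

namespace IsOrientationCover

theorem comp {k m : ℕ} {F : Fin k → V → V → Prop} (hF : IsOrientationCover G F)
    {f : Fin m → Fin k} (hf : Function.Surjective f) : IsOrientationCover G (F ∘ f) := by
  refine ⟨fun j => hF.1 (f j), fun v u w hvu hvw => ?_⟩
  obtain ⟨i, hi⟩ := hF.2 v u w hvu hvw
  obtain ⟨j, rfl⟩ := hf i
  exact ⟨j, hi⟩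

/-- An empty covering exists only for an edgeless graph, where any family of relations is one. -/
theorem mono {k m : ℕ} {F : Fin k → V → V → Prop} (hF : IsOrientationCover G F) (hkm : k ≤ m) :
    ∃ F' : Fin m → V → V → Prop, IsOrientationCover G F' := by
  rcases Nat.eq_zero_or_pos k with rfl | hk
  · have hG : ∀ u v, ¬ G.Adj u v := fun u v huv => (hF.2 u v v huv huv).choose.elim0
    exact ⟨fun _ _ _ => False, fun _ u v huv => (hG u v huv).elim,
      fun v u _ hvu => (hG v u hvu).elim⟩
  · have : Nonempty (Fin k) := ⟨⟨0, hk⟩⟩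
    exact ⟨_, hF.comp (Function.invFun_surjective (Fin.castLE_injective hkm))⟩

theorem exists_source {F : Fin 2 → V → V → Prop} (hF : IsOrientationCover G F) (v : V) :
    ∃ i, ∀ u, G.Adj v u → F i v u := by
  by_contra! h
  choose u hadj hout using h
  obtain ⟨i, hi₀, hi₁⟩ := hF.2 v (u 0) (u 1) (hadj 0) (hadj 1)
  fin_cases i
  exacts [hout 0 hi₀, hout 1 hi₁]

end IsOrientationCover

theorem orientCoverNum_eq_succ {n : ℕ} {F : Fin (n + 1) → V → V → Prop}
    (hF : IsOrientationCover G F)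
    (hn : ¬ ∃ F' : Fin n → V → V → Prop, IsOrientationCover G F') :
    orientCoverNum G = n + 1 :=
  (Nat.sInf_upward_closed_eq_succ_iff (fun _ _ hkm hk => hk.elim fun _ hF' => hF'.mono hkm) n).mpr
    ⟨⟨F, hF⟩, hn⟩

theorem not_isOrientationCover_top_fin_two [Fintype V] (hV : 2 < Fintype.card V) :
    ¬ ∃ F : Fin 2 → V → V → Prop, IsOrientationCover (⊤ : SimpleGraph V) F := by
  rintro ⟨F, hF⟩
  choose source hsource using hF.exists_source
  obtain ⟨u, v, huv, hsame⟩ := Fintype.exists_ne_map_eq_of_card_lt source (by simpa using hV)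
  exact (hF.1 (source u)).not_and huv ⟨hsource u v huv, hsame ▸ hsource v u huv.symm⟩

/-- Orientation `i` orders the vertices as `i, 3` followed by the other two in increasing order;
`![a, b, c, d]` lists the positions of the vertices `0, 1, 2, 3`. -/
def k4Position : Fin 3 → Fin 4 → Fin 4 :=
  ![![0, 2, 3, 1], ![2, 0, 3, 1], ![2, 3, 0, 1]]

theorem isOrientationCover_k4Position :
    IsOrientationCover (⊤ : SimpleGraph (Fin 4)) fun i u v => k4Position i u < k4Position i v := by
  refine ⟨fun i => isOrientation_of_injective_s17 ?_, ?_⟩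
  · revert i; decide
  · simp only [top_adj]; decide

/-- `σ(K_4) = 3`: there is an orientation covering of `K_4` of
size 3, and none of size 2. -/
theorem stmt17 :
    orientCoverNum (⊤ : SimpleGraph (Fin 4)) = 3 ∧
    (∃ F : Fin 3 → (Fin 4 → Fin 4 → Prop),
      IsOrientationCover (⊤ : SimpleGraph (Fin 4)) F) ∧
    ¬ ∃ F : Fin 2 → (Fin 4 → Fin 4 → Prop),
      IsOrientationCover (⊤ : SimpleGraph (Fin 4)) F := by
  have hno := not_isOrientationCover_top_fin_two (V := Fin 4) (by simp)
  exact ⟨orientCoverNum_eq_succ isOrientationCover_k4Position hno,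
    ⟨_, isOrientationCover_k4Position⟩, hno⟩
end
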